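/- Let {S_i}_{i∈I} be an inverse system of spectral spaces over a directed partially ordered set I, with quasi-compact surjective transition maps p_{ij}, and let S = lim_i S_i. Then the natural continuous map π₀(S) → lim_i π₀(S_i), whose i-th component is induced by the projection pr_i: S → S_i (the target being the inverse limit of the spaces π₀(S_i) along the maps induced by the p_{ij}, topologized as a subspace of the product), is a homeomorphism. -/

import Mathlib

/-- A topological space is *spectral* if it is quasi-compact, T0, sober, and the
quasi-compact open subsets are stable under finite intersections and form a basis. -/
def IsSpectralSpace (X : Type*) [TopologicalSpace X] : Prop :=
  CompactSpace X ∧ T0Space X ∧ QuasiSober X ∧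
    (∀ U V : Set X, IsOpen U → IsCompact U → IsOpen V → IsCompact V → IsCompact (U ∩ V)) ∧
    TopologicalSpace.IsTopologicalBasis {U : Set X | IsOpen U ∧ IsCompact U}

/-!
In the constructible topology a spectral space is compact and totally separated, and spectral
maps stay continuous, so by Tychonoff a compatible family of nonempty pro-constructible subsets
of the `S i` has a point in the limit. This makes `S` compact and `π₀(S) → lim π₀(S i)`
surjective. For injectivity, the limit of the connected components of the coordinates of a point
is connected: by compactness a separation of it comes from quasi-compact opens at one level, and
a pro-constructible form of the same compactness argument moves it to a level where it would
separate a connected component. Finally, the connected components of a spectral space are its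
quasi-components (two points without a common generalization have disjoint neighbourhoods), so
`π₀(S i)` is Hausdorff, and a continuous bijection from the compact space `π₀(S)` is a
homeomorphism.
-/

open Set Filter Topology WithTopology

theorem IsSpectralSpace.spectralSpace {X : Type*} [TopologicalSpace X]
    (h : IsSpectralSpace X) : SpectralSpace X :=
  have ⟨hc, ht, hs, hsep, hb⟩ := h
  { toT0Space := ht, toCompactSpace := hc, toQuasiSober := hs,
    toQuasiSeparatedSpace := ⟨hsep⟩, toPrespectralSpace := ⟨hb⟩ }

section Constructible

variable {X Y : Type*} [TopologicalSpace X] [TopologicalSpace Y]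

theorem isClopen_ofTopology_preimage {s : Set X} (hs : IsOpen s) (hc : IsCompact s) :
    IsClopen (ofTopology ⁻¹' s : Set (WithConstructibleTopology X)) :=
  ⟨⟨IsCompact.isOpen_constructibleTopology_of_isClosed (s := sᶜ) (by rwa [compl_compl])
    hs.isClosed_compl⟩, hc.isOpen_constructibleTopology_of_isOpen hs⟩

theorem continuous_ofTopology_withConstructibleTopology [PrespectralSpace X] :
    Continuous (ofTopology : WithConstructibleTopology X → X) :=
  continuous_def.2 fun _ hs => PrespectralSpace.isTopologicalBasis.isOpen_induction
    (fun _ hb => (isClopen_ofTopology_preimage hb.1 hb.2).isOpen)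
    (fun _ h => by rw [preimage_sUnion]; exact isOpen_biUnion h) hs

instance WithConstructibleTopology.totallySeparatedSpace [T0Space X] [PrespectralSpace X] :
    TotallySeparatedSpace (WithConstructibleTopology X) := by
  refine totallySeparatedSpace_iff_exists_isClopen.2 fun x y hxy => ?_
  have hb z := (PrespectralSpace.isTopologicalBasis (X := X)).nhds_hasBasis (a := z)
  by_cases hyx : x.ofTopology ⤳ y.ofTopology
  · have : ¬ y.ofTopology ⤳ x.ofTopology := fun h =>
      hxy (ofTopology_injective _ (hyx.antisymm h).eq)
    rw [(hb _).specializes_iff] at this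
    push Not at this
    obtain ⟨U, ⟨hU, hxU⟩, hyU⟩ := this
    exact ⟨_, isClopen_ofTopology_preimage hU.1 hU.2, hxU, hyU⟩
  · rw [(hb _).specializes_iff] at hyx
    push Not at hyx
    obtain ⟨U, ⟨hU, hyU⟩, hxU⟩ := hyx
    exact ⟨_, (isClopen_ofTopology_preimage hU.1 hU.2).compl, hxU, not_not.2 hyU⟩

theorem IsSpectralMap.continuous_withConstructibleTopology {f : X → Y} (hf : IsSpectralMap f) :
    Continuous fun x : WithConstructibleTopology X =>
      toTopology (constructibleTopology Y) (f x.ofTopology) := by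
  have : Continuous[constructibleTopology X, constructibleTopology Y] f := by
    refine continuous_generateFrom_iff.2 fun s hs => ?_
    rcases hs with ⟨hso, hsc⟩ | ⟨hsc, hso⟩
    · exact (hf.isCompact_preimage_of_isOpen hso hsc).isOpen_constructibleTopology_of_isOpen
        (hso.preimage hf.continuous)
    · exact IsCompact.isOpen_constructibleTopology_of_isClosed
        (hf.isCompact_preimage_of_isOpen hsc.isOpen_compl hso) (hsc.preimage hf.continuous)
  exact continuous_def.2 fun s hs => continuous_def.1 this _ hs

def IsProconstructible (s : Set X) : Prop :=
  IsClosed (ofTopology ⁻¹' s : Set (WithConstructibleTopology X))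

theorem IsClosed.isProconstructible [PrespectralSpace X] {s : Set X} (hs : IsClosed s) :
    IsProconstructible s :=
  hs.preimage continuous_ofTopology_withConstructibleTopology

theorem IsOpen.isProconstructible {s : Set X} (hs : IsOpen s) (hc : IsCompact s) :
    IsProconstructible s :=
  (isClopen_ofTopology_preimage hs hc).isClosed

theorem IsProconstructible.union {s t : Set X} (hs : IsProconstructible s)
    (ht : IsProconstructible t) : IsProconstructible (s ∪ t) :=
  IsClosed.union hs ht

theorem IsProconstructible.inter {s t : Set X} (hs : IsProconstructible s)
    (ht : IsProconstructible t) : IsProconstructible (s ∩ t) :=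
  IsClosed.inter hs ht

theorem isProconstructible_iInter {ι : Sort*} {s : ι → Set X}
    (hs : ∀ i, IsProconstructible (s i)) : IsProconstructible (⋂ i, s i) := by
  rw [IsProconstructible, preimage_iInter]
  exact isClosed_iInter hs

theorem IsProconstructible.preimage {f : X → Y} (hf : IsSpectralMap f) {s : Set Y}
    (hs : IsProconstructible s) : IsProconstructible (f ⁻¹' s) :=
  IsClosed.preimage hf.continuous_withConstructibleTopology hs

theorem exists_forall_mem_of_isProconstructible [SpectralSpace X] (F : Filter X) [F.NeBot] :
    ∃ z, ∀ s, IsProconstructible s → s ∈ F → z ∈ s := by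
  obtain ⟨z, hz⟩ :=
    exists_clusterPt_of_compactSpace (F.map (toTopology (constructibleTopology X)))
  refine ⟨z.ofTopology, fun s hs hsF => ?_⟩
  have : ofTopology ⁻¹' s ∈ F.map (toTopology (constructibleTopology X)) := hsF
  exact hs.closure_subset (hz.mono (le_principal_iff.2 this)).mem_closure

end Constructible

section ConnectedComponents

variable {X : Type*} [TopologicalSpace X] [SpectralSpace X]

theorem SpectralSpace.disjoint_nhds_nhds {a b : X} (h : ∀ z, z ⤳ a → ¬ z ⤳ b) :
    Disjoint (𝓝 a) (𝓝 b) := by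
  by_contra hab
  have : (𝓝 a ⊓ 𝓝 b).NeBot := ⟨fun h => hab (disjoint_iff.2 h)⟩
  obtain ⟨z, hz⟩ := exists_forall_mem_of_isProconstructible (𝓝 a ⊓ 𝓝 b)
  have hb x := (PrespectralSpace.isTopologicalBasis (X := X)).nhds_hasBasis (a := x)
  refine h z ((hb a).specializes_iff.2 fun U ⟨hU, haU⟩ => ?_)
    ((hb b).specializes_iff.2 fun U ⟨hU, hbU⟩ => ?_)
  · exact hz U (hU.1.isProconstructible hU.2) (mem_inf_of_left (hU.1.mem_nhds haU))
  · exact hz U (hU.1.isProconstructible hU.2) (mem_inf_of_right (hU.1.mem_nhds hbU))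

theorem SpectralSpace.separatedNhds {A B : Set X} (hA : IsClosed A) (hB : IsClosed B)
    (hAB : Disjoint A B) (hgen : ∀ z a, z ⤳ a → a ∈ A ∪ B → z ∈ A ∪ B) :
    SeparatedNhds A B := by
  rw [separatedNhds_iff_disjoint, hA.isCompact.disjoint_nhdsSet_left]
  refine fun a ha => hB.isCompact.disjoint_nhdsSet_right.2 fun b hb =>
    disjoint_nhds_nhds fun z hza hzb => ?_
  rcases hgen z a hza (.inl ha) with hz | hz
  · exact disjoint_left.1 hAB (hzb.mem_closed hA hz) hb
  · exact disjoint_left.1 hAB ha (hza.mem_closed hB hz)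

theorem SpectralSpace.connectedComponent_eq_iInter_isClopen (x : X) :
    connectedComponent x = ⋂ s : {s : Set X // IsClopen s ∧ x ∈ s}, s := by
  refine connectedComponent_subset_iInter_isClopen.antisymm ?_
  set Q := ⋂ s : {s : Set X // IsClopen s ∧ x ∈ s}, (s : Set X)
  have hQ : IsClosed Q := isClosed_iInter fun s => s.2.1.isClosed
  refine IsPreconnected.subset_connectedComponent ?_ (mem_iInter.2 fun s => s.2.2)
  rw [isPreconnected_iff_subset_of_fully_disjoint_closed hQ]
  intro u v hu hv hQuv huv
  have hQeq : u ∩ Q ∪ v ∩ Q = Q := by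
    rw [← union_inter_distrib_right, inter_eq_right.2 hQuv]
  obtain ⟨U, V, hU, hV, huU, hvV, hUV⟩ := separatedNhds (hu.inter hQ) (hv.inter hQ)
    (huv.mono inter_subset_left inter_subset_left) fun z a hza ha => by
      rw [hQeq] at ha ⊢
      exact mem_iInter.2 fun s => hza.mem_open s.2.1.isOpen (mem_iInter.1 ha s)
  have hQUV : Q ⊆ U ∪ V := hQeq ▸ union_subset_union huU hvV
  have : Nonempty {s : Set X // IsClopen s ∧ x ∈ s} :=
    ⟨⟨univ, isClopen_univ, mem_univ x⟩⟩
  obtain ⟨s, hs⟩ := exists_subset_nhds_of_isCompact'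
    (V := fun s : {s : Set X // IsClopen s ∧ x ∈ s} => (s : Set X))
    (fun s t =>
      ⟨⟨s ∩ t, s.2.1.inter t.2.1, s.2.2, t.2.2⟩, inter_subset_left, inter_subset_right⟩)
    (fun s => s.2.1.isClosed.isCompact) (fun s => s.2.1.isClosed)
    fun y hy => (hU.union hV).mem_nhds (hQUV hy)
  have hQsub : ∀ W : Set X, IsClopen ((s : Set X) ∩ W) → x ∈ W → Q ⊆ W :=
    fun W hW hxW => (iInter_subset _ ⟨_, hW, s.2.2, hxW⟩).trans inter_subset_right
  rcases hs s.2.2 with hxU | hxV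
  · have hQU := hQsub U (isClopen_inter_of_disjoint_cover_clopen s.2.1 hs hU hV hUV) hxU
    exact .inl fun y hy => (hQuv hy).resolve_right fun hyv =>
      disjoint_left.1 hUV (hQU hy) (hvV ⟨hyv, hy⟩)
  · have hQV := hQsub V (isClopen_inter_of_disjoint_cover_clopen s.2.1
      (by rwa [union_comm]) hV hU hUV.symm) hxV
    exact .inr fun y hy => (hQuv hy).resolve_left fun hyu =>
      disjoint_left.1 hUV (huU ⟨hyu, hy⟩) (hQV hy)

instance SpectralSpace.totallySeparatedSpace_connectedComponents :
    TotallySeparatedSpace (ConnectedComponents X) := by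
  refine totallySeparatedSpace_iff_exists_isClopen.2 fun a b hab => ?_
  obtain ⟨x, rfl⟩ := ConnectedComponents.surjective_coe a
  obtain ⟨y, rfl⟩ := ConnectedComponents.surjective_coe b
  have : y ∉ connectedComponent x := fun h =>
    hab (ConnectedComponents.coe_eq_coe.2 (connectedComponent_eq h))
  rw [connectedComponent_eq_iInter_isClopen, mem_iInter] at this
  push Not at this
  obtain ⟨⟨U, hU, hxU⟩, hyU⟩ := this
  have hU' : ConnectedComponents.mk ⁻¹' (ConnectedComponents.mk '' U) = U := by
    rw [connectedComponents_preimage_image, hU.biUnion_connectedComponent_eq]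
  exact ⟨_, ConnectedComponents.isQuotientMap_coe.isClopen_preimage.1 (hU'.symm ▸ hU),
    mem_image_of_mem _ hxU, fun h => hyU (hU'.subset h)⟩

end ConnectedComponents

section InverseLimit

variable {I : Type*} [PartialOrder I] {S : I → Type*}

abbrev InverseLimit (p : ∀ {i j : I}, j ≤ i → S i → S j) : Type _ :=
  {x : ∀ i, S i // ∀ (i j : I) (h : j ≤ i), p h (x i) = x j}

namespace InverseLimit

variable {p : ∀ {i j : I}, j ≤ i → S i → S j}

def proj (k : I) (x : InverseLimit p) : S k := x.1 k

theorem map_proj (x : InverseLimit p) {i j : I} (h : j ≤ i) : p h (proj i x) = proj j x :=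
  x.2 i j h

theorem preimage_proj_preimage {i j : I} (h : j ≤ i) (U : Set (S j)) :
    proj (p := p) i ⁻¹' (p h ⁻¹' U) = proj j ⁻¹' U := by
  ext x
  simp only [mem_preimage, map_proj]

variable [∀ i, TopologicalSpace (S i)]

theorem continuous_proj (k : I) : Continuous (proj (p := p) k) :=
  (continuous_apply k).comp continuous_subtype_val

theorem isClosed_setOf_map_eq [∀ i, T0Space (S i)] [∀ i, PrespectralSpace (S i)] {i j : I}
    {h : j ≤ i} (hp : IsSpectralMap (p h)) :
    IsClosed {x : ∀ i, WithConstructibleTopology (S i) |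
      toTopology _ (p h (x i).ofTopology) = x j} :=
  isClosed_eq (hp.continuous_withConstructibleTopology.comp (continuous_apply i))
    (continuous_apply j)

theorem compactSpace (hp : ∀ i j (h : j ≤ i), IsSpectralMap (p h))
    [∀ i, SpectralSpace (S i)] :
    CompactSpace (InverseLimit p) := by
  let E : Set (∀ i, WithConstructibleTopology (S i)) :=
    {x | ∀ i j (h : j ≤ i), toTopology _ (p h (x i).ofTopology) = x j}
  have hE : IsClosed E := by
    simp only [E, ofPred_forall]
    exact isClosed_iInter fun i => isClosed_iInter fun j => isClosed_iInter fun h =>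
      isClosed_setOf_map_eq (hp i j h)
  have hEimage :
      (fun x i => (x i).ofTopology) '' E = {y | ∀ i j (h : j ≤ i), p h (y i) = y j} :=
    Subset.antisymm (by rintro _ ⟨x, hx, rfl⟩ i j h; exact congrArg ofTopology (hx i j h))
      fun y hy => ⟨fun i => toTopology _ (y i), fun i j h => congrArg _ (hy i j h), rfl⟩
  have : IsCompact {y : ∀ i, S i | ∀ i j (h : j ≤ i), p h (y i) = y j} := hEimage ▸
    hE.isCompact.image (continuous_pi fun i =>
      continuous_ofTopology_withConstructibleTopology.comp (continuous_apply i))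
  exact isCompact_iff_compactSpace.1 this

variable [IsDirected I (· ≤ ·)]

theorem exists_forall_mem
    (hcomp : ∀ {i j k : I} (hij : j ≤ i) (hjk : k ≤ j) (x : S i),
      p hjk (p hij x) = p (hjk.trans hij) x)
    (hp : ∀ i j (h : j ≤ i), IsSpectralMap (p h)) [∀ i, SpectralSpace (S i)]
    (Z : ∀ i, Set (S i)) (hne : ∀ i, (Z i).Nonempty) (hZ : ∀ i, IsProconstructible (Z i))
    (hmaps : ∀ i j (h : j ≤ i), MapsTo (p h) (Z i) (Z j)) :
    ∃ x : InverseLimit p, ∀ i, proj i x ∈ Z i := by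
  classical
  rcases isEmpty_or_nonempty I with hI | hI
  · exact ⟨⟨isEmptyElim, isEmptyElim⟩, isEmptyElim⟩
  let C : I → Set (∀ i, WithConstructibleTopology (S i)) := fun i =>
    {x | (x i).ofTopology ∈ Z i ∧
      ∀ j (h : j ≤ i), toTopology _ (p h (x i).ofTopology) = x j}
  have hanti : ∀ i k, i ≤ k → C k ⊆ C i := by
    intro i k hik x ⟨hxZ, hx⟩
    have hxi : (x i).ofTopology = p hik (x k).ofTopology := congrArg ofTopology (hx i hik).symm
    refine ⟨hxi ▸ hmaps k i hik hxZ, fun j hji => ?_⟩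
    rw [hxi, hcomp, hx]
  have hCne : ∀ i, (C i).Nonempty := by
    intro i
    obtain ⟨z, hz⟩ := hne i
    refine ⟨fun j => toTopology _ (if h : j ≤ i then p h z else (hne j).some), ?_,
      fun j h => ?_⟩
    · simpa using hmaps i i le_rfl hz
    · simp [dif_pos h, hcomp]
  have hC : ∀ i, IsClosed (C i) := by
    intro i
    simp only [C, ofPred_and, ofPred_forall]
    have hZi : IsClosed (ofTopology ⁻¹' Z i : Set (WithConstructibleTopology (S i))) := hZ i
    exact (hZi.preimage (continuous_apply i)).inter <| isClosed_iInter fun j =>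
      isClosed_iInter fun h => isClosed_setOf_map_eq (p := p) (hp i j h)
  obtain ⟨x, hx⟩ := IsCompact.nonempty_iInter_of_directed_nonempty_isCompact_isClosed C
    (fun i j => (exists_ge_ge i j).imp fun k hk => ⟨hanti i k hk.1, hanti j k hk.2⟩)
    hCne (fun i => (hC i).isCompact) hC
  exact ⟨⟨fun i => (x i).ofTopology,
    fun i j h => congrArg ofTopology ((mem_iInter.1 hx i).2 j h)⟩,
    fun i => (mem_iInter.1 hx i).1⟩

theorem exists_isOpen_preimage_subset [Nonempty I] (hcont : ∀ i j (h : j ≤ i), Continuous (p h))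
    {z : InverseLimit p} {O : Set (InverseLimit p)} (hO : O ∈ 𝓝 z) :
    ∃ k, ∃ U : Set (S k), IsOpen U ∧ proj k z ∈ U ∧ proj k ⁻¹' U ⊆ O := by
  have hnhds : 𝓝 z = ⨅ k, comap (proj k) (𝓝 (proj k z)) := by
    refine (IsInducing.subtypeVal.nhds_eq_comap z).trans ?_
    rw [nhds_pi, Filter.pi, comap_iInf]
    simp only [comap_comap]
    rfl
  have hanti : ∀ i k (hik : i ≤ k),
      comap (proj (p := p) k) (𝓝 (proj k z)) ≤ comap (proj i) (𝓝 (proj i z)) := by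
    intro i k hik
    rw [← map_proj z hik, ← funext fun x => map_proj x hik]
    exact (comap_mono ((hcont k i hik).tendsto _).le_comap).trans_eq comap_comap
  rw [hnhds, mem_iInf_of_directed fun i j => (exists_ge_ge i j).imp fun k hk =>
    ⟨hanti i k hk.1, hanti j k hk.2⟩] at hO
  obtain ⟨k, V, hV, hVO⟩ := hO
  obtain ⟨U, hUV, hU, hzU⟩ := mem_nhds_iff.1 hV
  exact ⟨k, U, hU, hzU, (preimage_mono hUV).trans hVO⟩

theorem eventually_exists_isCompact_isOpen_preimage_between [Nonempty I]
    (hcont : ∀ i j (h : j ≤ i), Continuous (p h)) [∀ i, PrespectralSpace (S i)]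
    {K O : Set (InverseLimit p)} (hK : IsCompact K) (hO : IsOpen O) (hKO : K ⊆ O) :
    ∀ᶠ k in atTop, ∃ U : Set (S k), IsOpen U ∧ IsCompact U ∧ K ⊆ proj k ⁻¹' U ∧
      proj k ⁻¹' U ⊆ O := by
  let W : ∀ k, Set (S k) := fun k => ⋃₀ {U | IsOpen U ∧ proj k ⁻¹' U ⊆ O}
  have hWo : ∀ k, IsOpen (W k) := fun k => isOpen_sUnion fun U hU => hU.1
  have hWO : ∀ k, proj k ⁻¹' W k ⊆ O := fun k => by
    rw [preimage_sUnion]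
    exact iUnion₂_subset fun U hU => hU.2
  have hWmono : ∀ j k (hjk : j ≤ k), p hjk ⁻¹' W j ⊆ W k := by
    rintro j k hjk y ⟨U, hU, hyU⟩
    exact ⟨p hjk ⁻¹' U, ⟨hU.1.preimage (hcont k j hjk),
      (preimage_proj_preimage hjk U).symm ▸ hU.2⟩, hyU⟩
  have hcover : K ⊆ ⋃ k, proj k ⁻¹' W k := fun z hz => by
    obtain ⟨k, U, hU, hzU, hUO⟩ := exists_isOpen_preimage_subset hcont (hO.mem_nhds (hKO hz))
    exact mem_iUnion.2 ⟨k, U, ⟨hU, hUO⟩, hzU⟩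
  obtain ⟨k, hk⟩ := hK.elim_directed_cover _
    (fun k => (hWo k).preimage (continuous_proj k)) hcover
    fun i j => (exists_ge_ge i j).imp fun k (hk : i ≤ k ∧ j ≤ k) =>
      ⟨(preimage_proj_preimage hk.1 (W i)).symm ▸ preimage_mono (hWmono i k hk.1),
        (preimage_proj_preimage hk.2 (W j)).symm ▸ preimage_mono (hWmono j k hk.2)⟩
  refine eventually_atTop.2 ⟨k, fun m hkm => ?_⟩
  obtain ⟨U, hUc, hUo, hKU, hUW⟩ := PrespectralSpace.exists_isCompact_and_isOpen_between
    (hK.image (continuous_proj m)) ((hWo k).preimage (hcont m k hkm))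
    (image_subset_iff.2 ((preimage_proj_preimage hkm (W k)).symm ▸ hk))
  exact ⟨U, hUo, hUc, image_subset_iff.1 hKU,
    (preimage_mono hUW).trans ((preimage_proj_preimage hkm (W k)).symm ▸ hWO k)⟩

theorem exists_le_forall_notMem
    (hcomp : ∀ {i j k : I} (hij : j ≤ i) (hjk : k ≤ j) (x : S i),
      p hjk (p hij x) = p (hjk.trans hij) x)
    (hp : ∀ i j (h : j ≤ i), IsSpectralMap (p h)) [∀ i, SpectralSpace (S i)]
    (K : ∀ i, Set (S i)) (hK : ∀ i, IsProconstructible (K i))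
    (hmaps : ∀ i j (h : j ≤ i), MapsTo (p h) (K i) (K j)) {k : I} {D : Set (S k)}
    (hD : IsProconstructible D)
    (h : ∀ x : InverseLimit p, (∀ i, proj i x ∈ K i) → proj k x ∉ D) :
    ∃ m, ∃ hkm : k ≤ m, ∀ y ∈ K m, p hkm y ∉ D := by
  by_contra! hne
  let Z i := K i ∩ ⋂ hki : k ≤ i, p hki ⁻¹' D
  have hZne : ∀ i, (Z i).Nonempty := fun i => by
    obtain ⟨m, him, hkm⟩ := exists_ge_ge i k
    obtain ⟨y, hyK, hyD⟩ := hne m hkm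
    exact ⟨p him y, hmaps m i him hyK, mem_iInter.2 fun hki => by rwa [mem_preimage, hcomp]⟩
  have hZ : ∀ i, IsProconstructible (Z i) := fun i =>
    (hK i).inter (isProconstructible_iInter fun hki => hD.preimage (hp i k hki))
  have hZmaps : ∀ i j (hji : j ≤ i), MapsTo (p hji) (Z i) (Z j) :=
    fun i j hji y ⟨hyK, hyD⟩ => ⟨hmaps i j hji hyK, mem_iInter.2 fun hkj => by
      rw [mem_preimage, hcomp]
      exact mem_iInter.1 hyD _⟩
  obtain ⟨x, hx⟩ := exists_forall_mem hcomp hp Z hZne hZ hZmaps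
  exact h x (fun i => (hx i).1) (map_proj x le_rfl ▸ mem_iInter.1 (hx k).2 le_rfl)

theorem isPreconnected_setOf_forall_mem
    (hcomp : ∀ {i j k : I} (hij : j ≤ i) (hjk : k ≤ j) (x : S i),
      p hjk (p hij x) = p (hjk.trans hij) x)
    (hp : ∀ i j (h : j ≤ i), IsSpectralMap (p h)) [∀ i, SpectralSpace (S i)]
    (K : ∀ i, Set (S i)) (hKc : ∀ i, IsClosed (K i)) (hKp : ∀ i, IsPreconnected (K i))
    (hmaps : ∀ i j (h : j ≤ i), MapsTo (p h) (K i) (K j)) :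
    IsPreconnected {x : InverseLimit p | ∀ i, proj i x ∈ K i} := by
  rcases isEmpty_or_nonempty I with hI | hI
  · exact Set.Subsingleton.isPreconnected fun x _ y _ => Subtype.ext (funext isEmptyElim)
  have := compactSpace hp
  set C := {x : InverseLimit p | ∀ i, proj i x ∈ K i}
  have hC : IsClosed C := by
    simp only [C, ofPred_forall]
    exact isClosed_iInter fun i => (hKc i).preimage (continuous_proj i)
  rw [isPreconnected_iff_subset_of_fully_disjoint_closed hC]
  intro A B hA hB hCAB hAB
  have hcont i j (h : j ≤ i) := (hp i j h).continuous
  obtain ⟨k, ⟨U, hUo, hUc, hAU, hUB⟩, ⟨V, hVo, hVc, hBV, hVA⟩⟩ :=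
    ((eventually_exists_isCompact_isOpen_preimage_between hcont (hC.inter hA).isCompact
      hB.isOpen_compl fun x hx => disjoint_left.1 hAB hx.2).and
    (eventually_exists_isCompact_isOpen_preimage_between hcont (hC.inter hB).isCompact
      hA.isOpen_compl fun x hx => disjoint_right.1 hAB hx.2)).exists
  have hD : IsProconstructible (U ∩ V ∪ (U ∪ V)ᶜ) :=
    ((hUo.inter hVo).isProconstructible
      (QuasiSeparatedSpace.inter_isCompact _ _ hUo hUc hVo hVc)).union
      (hUo.union hVo).isClosed_compl.isProconstructible
  obtain ⟨m, hkm, hm⟩ := exists_le_forall_notMem hcomp hp K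
    (fun i => (hKc i).isProconstructible) hmaps hD fun x hx hxD => by
      rcases hxD with ⟨hxU, hxV⟩ | hxUV <;> rcases hCAB hx with hxA | hxB
      · exact hVA hxV hxA
      · exact hUB hxU hxB
      · exact hxUV (.inl (hAU ⟨hx, hxA⟩))
      · exact hxUV (.inr (hBV ⟨hx, hxB⟩))
  rcases isPreconnected_iff_subset_of_disjoint.1 (hKp m) _ _ (hUo.preimage (hcont m k hkm))
    (hVo.preimage (hcont m k hkm)) (fun y hy => not_not.1 fun h => hm y hy (.inr h))
    (eq_empty_iff_forall_notMem.2 fun y ⟨hy, hyUV⟩ => hm y hy (.inl hyUV)) with hKU | hKV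
  · exact .inl fun x hx => (hCAB hx).resolve_right
      (hUB (show proj k x ∈ U from map_proj x hkm ▸ hKU (hx m)))
  · exact .inr fun x hx => (hCAB hx).resolve_left
      (hVA (show proj k x ∈ V from map_proj x hkm ▸ hKV (hx m)))

theorem connectedComponents_mk_eq_of_forall
    (hcomp : ∀ {i j k : I} (hij : j ≤ i) (hjk : k ≤ j) (x : S i),
      p hjk (p hij x) = p (hjk.trans hij) x)
    (hp : ∀ i j (h : j ≤ i), IsSpectralMap (p h)) [∀ i, SpectralSpace (S i)]
    {x y : InverseLimit p}
    (hxy : ∀ i, ConnectedComponents.mk (proj i x) = ConnectedComponents.mk (proj i y)) :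
    ConnectedComponents.mk x = ConnectedComponents.mk y := by
  have hC := isPreconnected_setOf_forall_mem hcomp hp (fun i => connectedComponent (proj i x))
    (fun i => isClosed_connectedComponent) (fun i => isPreconnected_connectedComponent)
    fun i j h z hz => map_proj x h ▸
      (hp i j h).continuous.image_connectedComponent_subset _ (mem_image_of_mem _ hz)
  refine ConnectedComponents.coe_eq_coe.2 (connectedComponent_eq (hC.subset_connectedComponent
    (fun _ => mem_connectedComponent) fun i => ?_))
  rw [ConnectedComponents.coe_eq_coe.1 (hxy i)]
  exact mem_connectedComponent

theorem exists_forall_connectedComponents_mk_eq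
    (hcomp : ∀ {i j k : I} (hij : j ≤ i) (hjk : k ≤ j) (x : S i),
      p hjk (p hij x) = p (hjk.trans hij) x)
    (hp : ∀ i j (h : j ≤ i), IsSpectralMap (p h)) [∀ i, SpectralSpace (S i)]
    {q : ∀ {i j : I}, j ≤ i → ConnectedComponents (S i) → ConnectedComponents (S j)}
    (hq : ∀ i j (h : j ≤ i) (x : S i),
      q h (ConnectedComponents.mk x) = ConnectedComponents.mk (p h x))
    (c : InverseLimit q) :
    ∃ x : InverseLimit p, ∀ i, ConnectedComponents.mk (proj i x) = proj i c :=
  exists_forall_mem hcomp hp (fun i => ConnectedComponents.mk ⁻¹' {proj i c})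
    (fun i => ConnectedComponents.surjective_coe (proj i c))
    (fun _ => (isClosed_singleton.preimage ConnectedComponents.continuous_coe).isProconstructible)
    fun i j h y (hy : _ = _) => (hq i j h y).symm.trans (hy ▸ map_proj c h)

end InverseLimit

end InverseLimit

theorem stmt_8_general {I : Type*} [PartialOrder I] [IsDirected I (· ≤ ·)]
    (S : I → Type*) [∀ i, TopologicalSpace (S i)]
    (p : ∀ {i j : I}, j ≤ i → S i → S j)
    (hp_comp : ∀ {i j k : I} (hij : j ≤ i) (hjk : k ≤ j) (x : S i),
      p hjk (p hij x) = p (hjk.trans hij) x)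
    (hcont : ∀ (i j : I) (h : j ≤ i), Continuous (p h))
    (hspectral : ∀ i : I, IsSpectralSpace (S i))
    (hqc : ∀ (i j : I) (h : j ≤ i) (U : Set (S j)), IsOpen U → IsCompact U →
      IsCompact (p h ⁻¹' U))
    -- the maps `π₀(S i) → π₀(S j)` induced by the transition maps
    (q : ∀ {i j : I}, j ≤ i → ConnectedComponents (S i) → ConnectedComponents (S j))
    (hq : ∀ (i j : I) (h : j ≤ i) (x : S i),
      q h (ConnectedComponents.mk x) = ConnectedComponents.mk (p h x)) :
    ∃ Φ : ConnectedComponents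
        {x : ∀ i, S i // ∀ (i j : I) (h : j ≤ i), p h (x i) = x j} ≃ₜ
        {c : ∀ i, ConnectedComponents (S i) // ∀ (i j : I) (h : j ≤ i), q h (c i) = c j},
      ∀ x : {x : ∀ i, S i // ∀ (i j : I) (h : j ≤ i), p h (x i) = x j},
        (Φ (ConnectedComponents.mk x)).1 = fun i => ConnectedComponents.mk (x.1 i) := by
  have := fun i => (hspectral i).spectralSpace
  have hp : ∀ i j (h : j ≤ i), IsSpectralMap (p h) := fun i j h => ⟨hcont i j h, hqc i j h⟩
  have := InverseLimit.compactSpace hp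
  let φ : InverseLimit p → InverseLimit q := fun x =>
    ⟨fun i => ConnectedComponents.mk (x.1 i),
      fun i j h => (hq i j h _).trans (congrArg _ (x.2 i j h))⟩
  have hφ : Continuous φ := continuous_induced_rng.2 <| continuous_pi fun i =>
    ConnectedComponents.continuous_coe.comp (InverseLimit.continuous_proj i)
  have hinj : Function.Injective hφ.connectedComponentsLift :=
    ConnectedComponents.surjective_coe.forall₂.2 fun x y hxy =>
      InverseLimit.connectedComponents_mk_eq_of_forall hp_comp hp fun i => congrArg (·.1 i) hxy
  have hsurj : Function.Surjective hφ.connectedComponentsLift := fun c =>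
    have ⟨x, hx⟩ := InverseLimit.exists_forall_connectedComponents_mk_eq hp_comp hp hq c
    ⟨ConnectedComponents.mk x, Subtype.ext (funext hx)⟩
  exact ⟨hφ.connectedComponentsLift_continuous.homeoOfEquivCompactToT2
    (f := .ofBijective _ ⟨hinj, hsurj⟩), fun _ => rfl⟩

/-- Let `{S i}` be an inverse system of spectral spaces over a directed
partially ordered set, with quasi-compact surjective continuous transition maps `p`, and
let `S = lim_i S i`.  Let `q` denote the family of maps `π₀(S i) → π₀(S j)` induced by the
transition maps.  Then the natural continuous map `π₀(S) → lim_i π₀(S i)`, whose `i`-th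
component is induced by the projection `pr_i : S → S i` (the target being the inverse
limit of the `π₀(S i)`, topologized as a subspace of the product), is a homeomorphism. -/
theorem stmt_8 {I : Type*} [PartialOrder I] [IsDirected I (· ≤ ·)]
    (S : I → Type*) [∀ i, TopologicalSpace (S i)]
    (p : ∀ {i j : I}, j ≤ i → S i → S j)
    (hp_id : ∀ (i : I) (x : S i), p (le_refl i) x = x)
    (hp_comp : ∀ {i j k : I} (hij : j ≤ i) (hjk : k ≤ j) (x : S i),
      p hjk (p hij x) = p (hjk.trans hij) x)
    (hcont : ∀ (i j : I) (h : j ≤ i), Continuous (p h))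
    (hspectral : ∀ i : I, IsSpectralSpace (S i))
    (hqc : ∀ (i j : I) (h : j ≤ i) (U : Set (S j)), IsOpen U → IsCompact U →
      IsCompact (p h ⁻¹' U))
    (hsurj : ∀ (i j : I) (h : j ≤ i), Function.Surjective (p h))
    -- the maps `π₀(S i) → π₀(S j)` induced by the transition maps
    (q : ∀ {i j : I}, j ≤ i → ConnectedComponents (S i) → ConnectedComponents (S j))
    (hq_cont : ∀ (i j : I) (h : j ≤ i), Continuous (q h))
    (hq : ∀ (i j : I) (h : j ≤ i) (x : S i),
      q h (ConnectedComponents.mk x) = ConnectedComponents.mk (p h x)) :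
    ∃ Φ : ConnectedComponents
        {x : ∀ i, S i // ∀ (i j : I) (h : j ≤ i), p h (x i) = x j} ≃ₜ
        {c : ∀ i, ConnectedComponents (S i) // ∀ (i j : I) (h : j ≤ i), q h (c i) = c j},
      ∀ x : {x : ∀ i, S i // ∀ (i j : I) (h : j ≤ i), p h (x i) = x j},
        (Φ (ConnectedComponents.mk x)).1 = fun i => ConnectedComponents.mk (x.1 i) :=
  stmt_8_general S p hp_comp hcont hspectral hqc q hq
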